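/- Suppose P ≠ ∅ and let n ∈ P. Let ā, b̄, c̄ be pairwise disjoint n-tuples of pairwise distinct elements of M representing pairwise distinct E_n-classes with ā <_n b̄ <_n c̄. Then the partial isomorphism fixing ā pointwise and sending b̄ to c̄ does not extend to an automorphism of any finite substructure of M containing ā, b̄ and c̄. In particular M does not satisfy Hrushovski's extension property. -/

import Mathlib

open FirstOrder Language Structure CategoryTheory

/-- The language `L₀` with a `2n`-ary relation symbol `E_n` for each `n ≥ 1`. -/
def L₀ : FirstOrder.Language where
  Functions := fun _ => Empty
  Relations := fun k => {n : ℕ // 0 < n ∧ k = n + n}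

/-- The relation symbol `E_n`. -/
def Esymb (n : ℕ) (hn : 0 < n) : L₀.Relations (n + n) := ⟨n, hn, rfl⟩

/-- `E_n(x̄, ȳ)` in an `L₀`-structure. -/
def ERel (M : Type*) [L₀.Structure M] (n : ℕ) (hn : 0 < n) (x y : Fin n → M) : Prop :=
  Structure.RelMap (Esymb n hn) (Fin.append x y)

/-- The defining conditions for membership in `K₀`: each `E_n` holds only on pairs of
injective `n`-tuples, is invariant under permuting the entries of each tuple separately,
and induces an equivalence relation on `n`-element subsets. -/
def IsK0Struct (C : Type*) [L₀.Structure C] : Prop :=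
  ∀ (n : ℕ) (hn : 0 < n),
    (∀ x y : Fin n → C, ERel C n hn x y → Function.Injective x ∧ Function.Injective y) ∧
    (∀ (x y : Fin n → C) (σ τ : Equiv.Perm (Fin n)),
        ERel C n hn x y → ERel C n hn (x ∘ σ) (y ∘ τ)) ∧
    (∀ x : Fin n → C, Function.Injective x → ERel C n hn x x) ∧
    (∀ x y : Fin n → C, ERel C n hn x y → ERel C n hn y x) ∧
    (∀ x y z : Fin n → C, ERel C n hn x y → ERel C n hn y z → ERel C n hn x z)

/-- The class `K₀` of finite `L₀`-structures as above. -/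
def K₀ : Set (Bundled L₀.Structure) := {C | Finite C ∧ IsK0Struct C}

/-- The language `L_P`: a `2n`-ary symbol `E_n` for each `n ≥ 1` and a `2n`-ary symbol
`<_n` for each `n ∈ P`. -/
def LP (P : Set ℕ) : FirstOrder.Language where
  Functions := fun _ => Empty
  Relations := fun k => {n : ℕ // 0 < n ∧ k = n + n} ⊕ {n : ℕ // n ∈ P ∧ k = n + n}

/-- The symbol `E_n` of `L_P`. -/
def EsymbP (P : Set ℕ) (n : ℕ) (hn : 0 < n) : (LP P).Relations (n + n) :=
  Sum.inl ⟨n, hn, rfl⟩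

/-- The symbol `<_n` of `L_P`. -/
def LTsymbP (P : Set ℕ) (n : ℕ) (hn : n ∈ P) : (LP P).Relations (n + n) :=
  Sum.inr ⟨n, hn, rfl⟩

/-- `E_n(x̄, ȳ)` in an `L_P`-structure. -/
def ERelP (P : Set ℕ) (M : Type*) [i : (LP P).Structure M] (n : ℕ) (hn : 0 < n)
    (x y : Fin n → M) : Prop :=
  @Structure.RelMap (LP P) M i (n + n) (EsymbP P n hn) (Fin.append x y)

/-- `x̄ <_n ȳ` in an `L_P`-structure. -/
def LTRelP (P : Set ℕ) (M : Type*) [i : (LP P).Structure M] (n : ℕ) (hn : n ∈ P)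
    (x y : Fin n → M) : Prop :=
  @Structure.RelMap (LP P) M i (n + n) (LTsymbP P n hn) (Fin.append x y)

/-- The defining conditions for membership in `K_P`: the `{E_n}`-part satisfies the
`K₀`-conditions, and for `n ∈ P` the relation `<_n` holds only on injective tuples, is
`E_n`-invariant, and induces a strict linear order on `E_n`-classes. -/
def IsKPStruct (P : Set ℕ) (C : Type*) [(LP P).Structure C] : Prop :=
  (∀ (n : ℕ) (hn : 0 < n),
    (∀ x y : Fin n → C, ERelP P C n hn x y → Function.Injective x ∧ Function.Injective y) ∧
    (∀ (x y : Fin n → C) (σ τ : Equiv.Perm (Fin n)),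
        ERelP P C n hn x y → ERelP P C n hn (x ∘ σ) (y ∘ τ)) ∧
    (∀ x : Fin n → C, Function.Injective x → ERelP P C n hn x x) ∧
    (∀ x y : Fin n → C, ERelP P C n hn x y → ERelP P C n hn y x) ∧
    (∀ x y z : Fin n → C, ERelP P C n hn x y → ERelP P C n hn y z → ERelP P C n hn x z)) ∧
  (∀ (n : ℕ) (hn : n ∈ P) (hn0 : 0 < n),
    (∀ x y : Fin n → C, LTRelP P C n hn x y → Function.Injective x ∧ Function.Injective y) ∧
    (∀ x x' y y' : Fin n → C, ERelP P C n hn0 x x' → ERelP P C n hn0 y y' →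
        LTRelP P C n hn x y → LTRelP P C n hn x' y') ∧
    (∀ x y : Fin n → C, LTRelP P C n hn x y → ¬ ERelP P C n hn0 x y) ∧
    (∀ x y z : Fin n → C, LTRelP P C n hn x y → LTRelP P C n hn y z → LTRelP P C n hn x z) ∧
    (∀ x y : Fin n → C, Function.Injective x → Function.Injective y →
        ¬ ERelP P C n hn0 x y → LTRelP P C n hn x y ∨ LTRelP P C n hn y x))

/-- The class `K_P` of finite `L_P`-structures as above. -/
def KP (P : Set ℕ) : Set (Bundled (LP P).Structure) := {C | Finite C ∧ IsKPStruct P C}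

/-- Hrushovski's extension property: every finite family of isomorphisms between finite
substructures extends, inside some finite substructure `F` containing all their domains
and ranges, to automorphisms of `F`. -/
def HEP (L : FirstOrder.Language) (M : Type*) [L.Structure M] : Prop :=
  ∀ (k : ℕ) (S T : Fin k → L.Substructure M),
    (∀ i, Set.Finite (S i : Set M)) → (∀ i, Set.Finite (T i : Set M)) →
    ∀ f : (i : Fin k) → S i ≃[L] T i,
      ∃ F : L.Substructure M, Set.Finite (F : Set M) ∧
        ∃ (hS : ∀ i, S i ≤ F) (_ : ∀ i, T i ≤ F) (g : Fin k → (F ≃[L] F)),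
          ∀ (i : Fin k) (x : M) (hx : x ∈ S i),
            ((g i ⟨x, hS i hx⟩ : F) : M) = ((f i ⟨x, hx⟩ : T i) : M)

/-! An automorphism `g` of a finite structure in `K_P` with `b̄ <_n g b̄` would give, by
transitivity, `b̄ <_n gᵏ b̄` for all `k ≥ 1`; taking `k` the order of `g` yields `b̄ <_n b̄`,
contradicting irreflexivity. To refute Hrushovski's extension property it remains to find a
partial isomorphism of `M` sending an `n`-tuple to a `<_n`-larger one. Order the `m`-subsets of
`Fin (n + n)` colexicographically: since colex is preserved by strictly monotone maps, the
lower and upper halves of `Fin (n + n)` induce isomorphic substructures while the lower half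
is colex-smaller than the upper one. Embedding this structure into `M` gives the partial
isomorphism. -/

open Function Finset

theorem Fin.comp_append {α β : Type*} {m k : ℕ} (f : α → β) (x : Fin m → α) (y : Fin k → α) :
    f ∘ Fin.append x y = Fin.append (f ∘ x) (f ∘ y) := by
  funext i
  refine Fin.addCases (fun i => ?_) (fun i => ?_) i <;> simp

instance (P : Set ℕ) : (LP P).IsRelational := fun _ => inferInstanceAs (IsEmpty Empty)

section KPStruct

variable {P : Set ℕ} {n : ℕ}

theorem LTRelP_comp_embedding_iff {A B : Type*} [(LP P).Structure A] [(LP P).Structure B]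
    (φ : A ↪[LP P] B) (hn : n ∈ P) (x y : Fin n → A) :
    LTRelP P B n hn (φ ∘ x) (φ ∘ y) ↔ LTRelP P A n hn x y := by
  unfold LTRelP
  rw [← Fin.comp_append]
  exact φ.map_rel _ _

variable {C : Type*} [(LP P).Structure C]

theorem IsKPStruct.not_LTRelP_self (hC : IsKPStruct P C) (hn : n ∈ P) (hn0 : 0 < n)
    (x : Fin n → C) : ¬ LTRelP P C n hn x x := fun h =>
  (hC.2 n hn hn0).2.2.1 x x h ((hC.1 n hn0).2.2.1 x ((hC.2 n hn hn0).1 x x h).1)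

theorem IsKPStruct.not_LTRelP_comp_automorphism [Finite C] (hC : IsKPStruct P C) (hn : n ∈ P)
    (hn0 : 0 < n) (g : C ≃[LP P] C) (x : Fin n → C) : ¬ LTRelP P C n hn x (g ∘ x) := by
  intro hlt
  have hiterate : ∀ k, LTRelP P C n hn x ((⇑g)^[k + 1] ∘ x) := by
    intro k
    induction k with
    | zero => simpa using hlt
    | succ k ih =>
      have hmap := (LTRelP_comp_embedding_iff g.toEmbedding hn _ _).2 ih
      rw [iterate_succ', comp_assoc]
      exact (hC.2 n hn hn0).2.2.2.1 _ _ _ hlt hmap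
  obtain ⟨N, hN, hgN⟩ := (isOfFinOrder_of_finite (g.toEquiv : Equiv.Perm C)).exists_pow_eq_one
  obtain ⟨k, rfl⟩ := Nat.exists_eq_succ_of_ne_zero hN.ne'
  have hid : (⇑g)^[k + 1] = id :=
    (Equiv.Perm.coe_pow _ _).symm.trans (congrArg DFunLike.coe hgN)
  have hself := hiterate k
  rw [hid, id_comp] at hself
  exact hC.not_LTRelP_self hn hn0 x hself

end KPStruct

section Age

universe u

variable {P : Set ℕ} {M : Type u} [(LP P).Structure M]

theorem isKPStruct_of_age_eq_KP (hage : (LP P).age M = KP P) (F : (LP P).Substructure M)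
    (hF : (F : Set M).Finite) : IsKPStruct P F := by
  have hmem : (⟨F, inferInstance⟩ : Bundled (LP P).Structure) ∈ (LP P).age M :=
    ⟨(Structure.fg_iff_finite).2 hF.to_subtype, ⟨F.subtype⟩⟩
  rw [hage] at hmem
  exact hmem.2

theorem nonempty_embedding_of_age_eq_KP (hage : (LP P).age M = KP P) (C : Type u)
    [(LP P).Structure C] [Finite C] (hC : IsKPStruct P C) : Nonempty (C ↪[LP P] M) := by
  have hmem : (⟨C, inferInstance⟩ : Bundled (LP P).Structure) ∈ KP P := ⟨‹Finite C›, hC⟩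
  rw [← hage] at hmem
  exact hmem.2

theorem not_forall_automorphism_apply_eq_of_LTRelP (hage : (LP P).age M = KP P) {n : ℕ}
    (hn : n ∈ P) (hn0 : 0 < n) {F : (LP P).Substructure M} (hF : (F : Set M).Finite)
    {b c : Fin n → M} (hbF : ∀ l, b l ∈ F) (hlt : LTRelP P M n hn b c) (g : F ≃[LP P] F) :
    ¬ ∀ l, ((g ⟨b l, hbF l⟩ : F) : M) = c l := by
  intro hg
  have : Finite F := hF.to_subtype
  let x : Fin n → F := fun l => ⟨b l, hbF l⟩
  have hx : F.subtype ∘ x = b := rfl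
  have hgx : F.subtype ∘ (g ∘ x) = c := funext hg
  refine (isKPStruct_of_age_eq_KP hage F hF).not_LTRelP_comp_automorphism hn hn0 g x ?_
  rwa [← LTRelP_comp_embedding_iff F.subtype, hx, hgx]

end Age

section Colex

open Finset.Colex

variable {α β : Type*} [LinearOrder α] [LinearOrder β] {m : ℕ}

def SameSet (x y : Fin m → α) : Prop :=
  Function.Injective x ∧ Function.Injective y ∧ univ.image x = univ.image y

def ColexLT (x y : Fin m → α) : Prop :=
  Function.Injective x ∧ Function.Injective y ∧ toColex (univ.image x) < toColex (univ.image y)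

theorem sameSet_comp_iff {f : α → β} (hf : StrictMono f) (x y : Fin m → α) :
    SameSet (f ∘ x) (f ∘ y) ↔ SameSet x y := by
  simp only [SameSet, hf.injective.of_comp_iff, image_comp,
    (image_injective hf.injective).eq_iff]

theorem colexLT_comp_iff {f : α → β} (hf : StrictMono f) (x y : Fin m → α) :
    ColexLT (f ∘ x) (f ∘ y) ↔ ColexLT x y := by
  simp only [ColexLT, hf.injective.of_comp_iff, image_comp, toColex_image_lt_toColex_image hf]

variable (P : Set ℕ) (α)

@[reducible]
def colexStructure : (LP P).Structure α where
  RelMap {k} r v := r.elim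
    (fun s => SameSet (fun i => v (Fin.cast s.2.2.symm (Fin.castAdd s.1 i)))
      (fun i => v (Fin.cast s.2.2.symm (Fin.natAdd s.1 i))))
    (fun s => ColexLT (fun i => v (Fin.cast s.2.2.symm (Fin.castAdd s.1 i)))
      (fun i => v (Fin.cast s.2.2.symm (Fin.natAdd s.1 i))))

attribute [local instance] colexStructure

variable {P α}

theorem colex_ERelP_iff (hm : 0 < m) (x y : Fin m → α) : ERelP P α m hm x y ↔ SameSet x y := by
  show SameSet (fun i => Fin.append x y (Fin.cast rfl (Fin.castAdd m i))) _ ↔ _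
  simp only [Fin.cast_eq_self, Fin.append_left, Fin.append_right]

theorem colex_LTRelP_iff (hm : m ∈ P) (x y : Fin m → α) : LTRelP P α m hm x y ↔ ColexLT x y := by
  show ColexLT (fun i => Fin.append x y (Fin.cast rfl (Fin.castAdd m i))) _ ↔ _
  simp only [Fin.cast_eq_self, Fin.append_left, Fin.append_right]

theorem isKPStruct_colex : IsKPStruct P α := by
  refine ⟨fun m hm => ⟨?_, ?_, ?_, ?_, ?_⟩, fun m hm hm0 => ⟨?_, ?_, ?_, ?_, ?_⟩⟩ <;>
    simp only [colex_ERelP_iff, colex_LTRelP_iff]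
  · exact fun x y h => ⟨h.1, h.2.1⟩
  · rintro x y σ τ ⟨hx, hy, hxy⟩
    refine ⟨hx.comp σ.injective, hy.comp τ.injective, ?_⟩
    rwa [image_comp, image_comp, image_univ_equiv, image_univ_equiv]
  · exact fun x hx => ⟨hx, hx, rfl⟩
  · exact fun x y h => ⟨h.2.1, h.1, h.2.2.symm⟩
  · exact fun x y z hxy hyz => ⟨hxy.1, hyz.2.1, hxy.2.2.trans hyz.2.2⟩
  · exact fun x y h => ⟨h.1, h.2.1⟩
  · rintro x x' y y' ⟨-, hx', hxx'⟩ ⟨-, hy', hyy'⟩ ⟨-, -, hlt⟩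
    exact ⟨hx', hy', hxx' ▸ hyy' ▸ hlt⟩
  · exact fun x y h he => h.2.2.ne (congrArg toColex he.2.2)
  · exact fun x y z hxy hyz => ⟨hxy.1, hyz.2.1, hxy.2.2.trans hyz.2.2⟩
  · intro x y hx hy hne
    rcases lt_trichotomy (toColex (univ.image x)) (toColex (univ.image y)) with h | h | h
    · exact Or.inl ⟨hx, hy, h⟩
    · exact absurd ⟨hx, hy, congrArg ofColex h⟩ hne
    · exact Or.inr ⟨hy, hx, h⟩

def StrictMono.colexEmbedding {f : α → β} (hf : StrictMono f) : α ↪[LP P] β where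
  toFun := f
  inj' := hf.injective
  map_fun' := fun g => isEmptyElim g
  map_rel' := by
    rintro _ (⟨m, _, rfl⟩ | ⟨m, _, rfl⟩) v
    · exact sameSet_comp_iff hf _ _
    · exact colexLT_comp_iff hf _ _

theorem colexLT_castAdd_natAdd {n : ℕ} (hn0 : 0 < n) :
    ColexLT (Fin.castAdd n : Fin n → Fin (n + n)) (Fin.natAdd n) := by
  refine ⟨Fin.castAdd_injective n n, Fin.natAdd_injective n n, ?_⟩
  rw [toColex_lt_toColex_iff_exists_forall_lt]
  refine ⟨Fin.natAdd n ⟨0, hn0⟩, mem_image_of_mem _ (mem_univ _), ?_, ?_⟩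
  · rw [mem_image]
    rintro ⟨i, -, hi⟩
    have hval := congrArg Fin.val hi
    rw [Fin.val_castAdd, Fin.val_natAdd] at hval
    omega
  · simp [Fin.lt_def]

end Colex

section HEP

attribute [local instance] colexStructure

theorem not_HEP_of_age_eq_KP {P : Set ℕ} {M : Type} [(LP P).Structure M]
    (hage : (LP P).age M = KP P) {n : ℕ} (hn : n ∈ P) (hn0 : 0 < n) : ¬ HEP (LP P) M := by
  intro hHEP
  obtain ⟨e⟩ := nonempty_embedding_of_age_eq_KP hage (Fin (n + n)) isKPStruct_colex
  let φ : Fin n ↪[LP P] M := e.comp (Fin.strictMono_castAdd n).colexEmbedding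
  let ψ : Fin n ↪[LP P] M := e.comp (Fin.strictMono_natAdd n).colexEmbedding
  have hφψ : LTRelP P M n hn φ ψ := by
    change LTRelP P M n hn (e ∘ Fin.castAdd n) (e ∘ Fin.natAdd n)
    rw [LTRelP_comp_embedding_iff, colex_LTRelP_iff]
    exact colexLT_castAdd_natAdd hn0
  have hrange : ∀ χ : Fin n ↪[LP P] M, (χ.toHom.range : Set M).Finite := fun χ => by
    rw [Hom.range_coe]
    exact Set.finite_range χ
  let f : φ.toHom.range ≃[LP P] ψ.toHom.range := ψ.equivRange.comp φ.equivRange.symm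
  obtain ⟨F, hF, hS, -, g, hg⟩ := hHEP 1 (fun _ => φ.toHom.range) (fun _ => ψ.toHom.range)
    (fun _ => hrange φ) (fun _ => hrange ψ) (fun _ => f)
  have hφ : ∀ l, φ l ∈ φ.toHom.range := Hom.mem_range_self φ.toHom
  refine not_forall_automorphism_apply_eq_of_LTRelP hage hn hn0 hF (fun l => hS 0 (hφ l))
    hφψ (g 0) fun l => (hg 0 (φ l) (hφ l)).trans ?_
  change ((f (φ.equivRange l)) : M) = ψ l
  simp only [f, Language.Equiv.comp_apply, Language.Equiv.symm_apply_apply,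
    Embedding.equivRange_apply]

end HEP

theorem KP_limit_not_HEP_general (P : Set ℕ) (M : Type) [(LP P).Structure M]
    (hage : (LP P).age M = KP P) (n : ℕ) (hnP : n ∈ P) (hn0 : 0 < n) (a b c : Fin n → M)
    (hlt2 : LTRelP P M n hnP b c) :
    (∀ F : (LP P).Substructure M, Set.Finite (F : Set M) →
      ∀ (haF : ∀ l, a l ∈ F) (hbF : ∀ l, b l ∈ F) (_ : ∀ l, c l ∈ F),
        ¬ ∃ g : F ≃[LP P] F,
            (∀ l, g ⟨a l, haF l⟩ = ⟨a l, haF l⟩) ∧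
            (∀ l, ((g ⟨b l, hbF l⟩ : F) : M) = c l)) ∧
    ¬ HEP (LP P) M :=
  ⟨fun _ hF _ hbF _ ⟨g, _, hgb⟩ =>
      not_forall_automorphism_apply_eq_of_LTRelP hage hnP hn0 hF hbF hlt2 g hgb,
    not_HEP_of_age_eq_KP hage hnP hn0⟩

/-- for `n ∈ P` and pairwise disjoint injective `n`-tuples `a, b, c` lying
in pairwise distinct `E_n`-classes with `a <_n b <_n c`, the partial isomorphism fixing
`a` pointwise and sending `b` to `c` extends to an automorphism of no finite substructure
of `M`; in particular `M` does not satisfy Hrushovski's extension property. -/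
theorem KP_limit_not_HEP (P : Set ℕ) (hP : ∀ n ∈ P, 3 ≤ n) (hPne : P.Nonempty)
    (M : Type) [(LP P).Structure M] [Countable M]
    (hUH : (LP P).IsUltrahomogeneous M) (hage : (LP P).age M = KP P)
    (n : ℕ) (hnP : n ∈ P) (hn0 : 0 < n)
    (a b c : Fin n → M)
    (ha : Function.Injective a) (hb : Function.Injective b) (hc : Function.Injective c)
    (hab : Disjoint (Set.range a) (Set.range b))
    (hacd : Disjoint (Set.range a) (Set.range c))
    (hbc : Disjoint (Set.range b) (Set.range c))
    (hEab : ¬ ERelP P M n hn0 a b) (hEbc : ¬ ERelP P M n hn0 b c)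
    (hEac : ¬ ERelP P M n hn0 a c)
    (hlt1 : LTRelP P M n hnP a b) (hlt2 : LTRelP P M n hnP b c) :
    (∀ F : (LP P).Substructure M, Set.Finite (F : Set M) →
      ∀ (haF : ∀ l, a l ∈ F) (hbF : ∀ l, b l ∈ F) (_ : ∀ l, c l ∈ F),
        ¬ ∃ g : F ≃[LP P] F,
            (∀ l, g ⟨a l, haF l⟩ = ⟨a l, haF l⟩) ∧
            (∀ l, ((g ⟨b l, hbF l⟩ : F) : M) = c l)) ∧
    ¬ HEP (LP P) M :=
  KP_limit_not_HEP_general P M hage n hnP hn0 a b c hlt2
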